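/- arXiv:cs/0511097 — 2 statements merged into one kernel-verified Lean document; each statement's English description precedes it below -/
import Mathlib

section
/- Let K be a Kleene algebra and x ∈ K. The set {y ∈ K : y ≤ x} is closed under 0, 1, +, ·, and * (i.e., forms a subalgebra of K) if and only if x = x*. -/
open Computability

section KleeneAlgebra

variable {K : Type*} [KleeneAlgebra K] {x y z : K}

theorem mul_le_kstar_of_le_kstar (hy : y ≤ x∗) (hz : z ≤ x∗) : y * z ≤ x∗ :=
  calc y * z ≤ x∗ * x∗ := mul_le_mul' hy hz
    _ = x∗ := kstar_mul_kstar x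

theorem kstar_le_kstar_of_le_kstar (hy : y ≤ x∗) : y∗ ≤ x∗ :=
  calc y∗ ≤ x∗∗ := kstar_mono hy
    _ = x∗ := kstar_idem x

end KleeneAlgebra

theorem downset_subalgebra_iff_kstar_fixed {K : Type*} [KleeneAlgebra K] (x : K) :
    ((0 : K) ≤ x ∧ (1 : K) ≤ x ∧
      (∀ y z : K, y ≤ x → z ≤ x → y + z ≤ x) ∧
      (∀ y z : K, y ≤ x → z ≤ x → y * z ≤ x) ∧
      (∀ y : K, y ≤ x → y∗ ≤ x)) ↔ x = x∗ := by
  constructor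
  · rintro ⟨-, -, -, -, kstar_closed⟩
    exact le_antisymm le_kstar (kstar_closed x le_rfl)
  · intro hx
    rw [hx]
    exact ⟨zero_le, one_le_kstar, fun _ _ ↦ add_le, fun _ _ ↦ mul_le_kstar_of_le_kstar,
      fun _ ↦ kstar_le_kstar_of_le_kstar⟩
end

section
/- (Elimination of r = 0 in Kleene algebra with hypotheses.) Let E be a finite set of equations of Kleene algebra terms over atomic symbols p₁,…,pₙ, u = (p₁+⋯+pₙ)*, and r, s, t terms. Then all Kleene algebras satisfy (E ∧ r = 0) → s = t if and only if all Kleene algebras satisfy E → s + u·r·u = t + u·r·u. -/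
open Computability

/-- Regular expressions (Kleene algebra terms) over `n` atomic symbols. -/
inductive KTerm (n : ℕ) : Type
  | var : Fin n → KTerm n
  | zero : KTerm n
  | one : KTerm n
  | add : KTerm n → KTerm n → KTerm n
  | mul : KTerm n → KTerm n → KTerm n
  | star : KTerm n → KTerm n

/-- Evaluation of a term under an interpretation of the atomic symbols. -/
def KTerm.eval {n : ℕ} {K : Type*} [KleeneAlgebra K] (I : Fin n → K) : KTerm n → K
  | .var i => I i
  | .zero => 0
  | .one => 1
  | .add s t => s.eval I + t.eval I
  | .mul s t => s.eval I * t.eval I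
  | .star s => (s.eval I)∗

/-- The universal regular expression `u = (p₁ + ⋯ + pₙ)*`. -/
def univExp (n : ℕ) : KTerm n :=
  .star ((List.ofFn (KTerm.var : Fin n → KTerm n)).foldr KTerm.add KTerm.zero)

universe u

/-!
If `r = 0` then `u·r·u = 0`, which gives the easy direction. Conversely, let `K` satisfy `E` under
`I`, put `U = I(u)` and `⊥ = U·I(r)·U`. Every term evaluates below `U`, and `⊥` absorbs products
with elements below `U`; hence the interval `[⊥, U]`, with `0 = ⊥`, `1 = 1 + ⊥` and product
`x·y + ⊥`, is a Kleene algebra into which `x ↦ x + ⊥` maps the evaluation under `I` to the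
evaluation under `I + ⊥`. This algebra satisfies `E` and `r = 0` there, so `s = t` there, i.e.
`s + ⊥ = t + ⊥` in `K`.
-/

namespace KleeneAlgebra

variable {K : Type*} [KleeneAlgebra K]

structure IsAbsorbingBot (U c : K) : Prop where
  kstar_eq : U∗ = U
  le : c ≤ U
  mul_le_left : U * c ≤ c
  mul_le_right : c * U ≤ c

namespace IsAbsorbingBot

variable {U c a b : K}

section
variable (h : IsAbsorbingBot U c)
include h

theorem one_le : 1 ≤ U := h.kstar_eq ▸ one_le_kstar

theorem mul_self : U * U = U := (kstar_eq_self.1 h.kstar_eq).1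

theorem mul_le_of_le (ha : a ≤ U) (hb : b ≤ U) : a * b ≤ U :=
  (mul_le_mul' ha hb).trans h.mul_self.le

theorem kstar_le_of_le (ha : a ≤ U) : a∗ ≤ U :=
  (kstar_mono ha).trans h.kstar_eq.le

theorem mul_bot_le (ha : a ≤ U) : a * c ≤ c :=
  (mul_le_mul_left ha c).trans h.mul_le_left

theorem bot_mul_le (ha : a ≤ U) : c * a ≤ c :=
  (mul_le_mul_right ha c).trans h.mul_le_right

theorem mul_add_bot (ha : a ≤ U) (hb : b ≤ U) : (a + c) * (b + c) + c = a * b + c := by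
  have hcc : c * c ≤ c := h.bot_mul_le h.le
  simp only [add_mul, mul_add, add_assoc]
  rw [hcc.add_eq_right, (h.mul_bot_le ha).add_eq_right, (h.bot_mul_le hb).add_eq_right]

theorem kstar_add_bot (ha : a ≤ U) : (a + c)∗ = a∗ + c := by
  refine le_antisymm ?_ (add_le (kstar_mono le_self_add) (le_add_self.trans le_kstar))
  refine kstar_le_of_mul_le_right (one_le_kstar.trans le_self_add) ?_
  calc (a + c) * (a∗ + c) ≤ (a + c) * (a∗ + c) + c := le_self_add
    _ = a * a∗ + c := h.mul_add_bot ha (h.kstar_le_of_le ha)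
    _ ≤ a∗ + c := by gcongr; exact mul_kstar_le_kstar

end

theorem of_mul_mul {r : K} (hU : U∗ = U) (hr : r ≤ U) : IsAbsorbingBot U (U * (r * U)) := by
  have hUU : U * U = U := (kstar_eq_self.1 hU).1
  refine ⟨hU, ?_, ?_, ?_⟩
  · calc U * (r * U) ≤ U * (U * U) := by gcongr
      _ = U := by rw [hUU, hUU]
  · rw [← mul_assoc, hUU]
  · rw [mul_assoc, mul_assoc, hUU]


/-- The paper's `L = {x + ⊥ : x ≤ U}` with `⊥ = c`: the interval `[c, U]` with `0 = c`, `1 = 1 + c`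
and product `x * y + c`; sums and stars are those of `K`. -/
instance instKleeneAlgebraIcc [hc : Fact (IsAbsorbingBot U c)] : KleeneAlgebra (Set.Icc c U) where
  __ := (inferInstance : SemilatticeSup (Set.Icc c U))
  add x y := ⟨x + y, le_add_right x.2.1, add_le x.2.2 y.2.2⟩
  zero := ⟨c, le_rfl, hc.out.le⟩
  one := ⟨1 + c, le_add_self, add_le hc.out.one_le hc.out.le⟩
  mul x y := ⟨x * y + c, le_add_self, add_le (hc.out.mul_le_of_le x.2.2 y.2.2) hc.out.le⟩
  kstar x := ⟨x∗, x.2.1.trans le_kstar, hc.out.kstar_le_of_le x.2.2⟩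
  bot := ⟨c, le_rfl, hc.out.le⟩
  nsmul := @nsmulRec _ ⟨⟨c, le_rfl, hc.out.le⟩⟩
    ⟨fun x y => ⟨x + y, le_add_right x.2.1, add_le x.2.2 y.2.2⟩⟩
  bot_le x := x.2.1
  add_eq_sup x y := Subtype.ext (add_eq_sup _ _)
  add_assoc x y z := Subtype.ext (add_assoc _ _ _)
  add_comm x y := Subtype.ext (add_comm _ _)
  zero_add x := Subtype.ext x.2.1.add_eq_right
  add_zero x := Subtype.ext x.2.1.add_eq_left
  left_distrib x y z := Subtype.ext <| by
    show x * (y + z) + c = x * y + c + (x * z + c)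
    rw [mul_add, add_add_add_comm, add_idem]
  right_distrib x y z := Subtype.ext <| by
    show (x + y) * z + c = x * z + c + (y * z + c)
    rw [add_mul, add_add_add_comm, add_idem]
  zero_mul x := Subtype.ext (hc.out.bot_mul_le x.2.2).add_eq_right
  mul_zero x := Subtype.ext (hc.out.mul_bot_le x.2.2).add_eq_right
  mul_assoc x y z := Subtype.ext <| by
    show (x * y + c) * z + c = x * (y * z + c) + c
    rw [add_mul, mul_add, mul_assoc, add_assoc, add_assoc, (hc.out.bot_mul_le z.2.2).add_eq_right,
      (hc.out.mul_bot_le x.2.2).add_eq_right]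
  one_mul x := Subtype.ext <| by
    show (1 + c) * x + c = x
    rw [add_mul, one_mul, add_assoc, (hc.out.bot_mul_le x.2.2).add_eq_right, x.2.1.add_eq_left]
  mul_one x := Subtype.ext <| by
    show x * (1 + c) + c = x
    rw [mul_add, mul_one, add_assoc, (hc.out.mul_bot_le x.2.2).add_eq_right, x.2.1.add_eq_left]
  one_le_kstar x := add_le one_le_kstar (x.2.1.trans le_kstar)
  mul_kstar_le_kstar x := add_le mul_kstar_le_kstar (x.2.1.trans le_kstar)
  kstar_mul_le_kstar x := add_le kstar_mul_le_kstar (x.2.1.trans le_kstar)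
  mul_kstar_le_self x y hxy := add_le (mul_kstar_le_self (le_self_add.trans hxy)) y.2.1
  kstar_mul_le_self x y hxy := add_le (kstar_mul_le_self (le_self_add.trans hxy)) y.2.1

section
variable [Fact (IsAbsorbingBot U c)] (x y : Set.Icc c U)

theorem coe_add : ((x + y : Set.Icc c U) : K) = x + y := rfl

theorem coe_mul : ((x * y : Set.Icc c U) : K) = x * y + c := rfl

theorem coe_kstar : ((x∗ : Set.Icc c U) : K) = (x : K)∗ := rfl

end

def addBot (h : IsAbsorbingBot U c) (x : K) (hx : x ≤ U) : Set.Icc c U :=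
  ⟨x + c, le_add_self, add_le hx h.le⟩

theorem coe_addBot (h : IsAbsorbingBot U c) (x : K) (hx : x ≤ U) : (h.addBot x hx : K) = x + c :=
  rfl

end IsAbsorbingBot

end KleeneAlgebra

open KleeneAlgebra IsAbsorbingBot

namespace KTerm

variable {n : ℕ} {K : Type*} [KleeneAlgebra K]

theorem eval_foldr_add (I : Fin n → K) (l : List (KTerm n)) :
    (l.foldr add zero).eval I = (l.map (eval I)).sum := by
  induction l with
  | nil => rfl
  | cons w l ih => simp only [List.foldr_cons, List.map_cons, List.sum_cons, eval, ih]

theorem eval_le_of_forall_le {U : K} (hU : U∗ = U) {I : Fin n → K} (hI : ∀ i, I i ≤ U) :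
    ∀ w : KTerm n, w.eval I ≤ U
  | var i => hI i
  | zero => zero_le
  | one => (kstar_eq_self.1 hU).2
  | add v w => add_le (eval_le_of_forall_le hU hI v) (eval_le_of_forall_le hU hI w)
  | mul v w => (mul_le_mul' (eval_le_of_forall_le hU hI v) (eval_le_of_forall_le hU hI w)).trans
      (kstar_eq_self.1 hU).1.le
  | star w => (kstar_mono (eval_le_of_forall_le hU hI w)).trans hU.le

theorem le_eval_univExp (I : Fin n → K) (i : Fin n) : I i ≤ (univExp n).eval I := by
  refine le_trans ?_ le_kstar
  rw [eval_foldr_add, List.map_ofFn]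
  exact List.le_sum_of_mem (List.mem_ofFn.2 ⟨i, rfl⟩)

theorem eval_le_univExp (I : Fin n → K) (w : KTerm n) : w.eval I ≤ (univExp n).eval I :=
  eval_le_of_forall_le (kstar_idem _) (le_eval_univExp I) w

theorem eval_addBot {U c : K} [hc : Fact (IsAbsorbingBot U c)] {I : Fin n → K}
    (hI : ∀ i, I i ≤ U) :
    ∀ w : KTerm n, w.eval (fun i => hc.out.addBot (I i) (hI i)) =
      hc.out.addBot (w.eval I) (eval_le_of_forall_le hc.out.kstar_eq hI w)
  | var i => rfl
  | zero => Subtype.ext (zero_add c).symm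
  | one => rfl
  | add v w => Subtype.ext <| by
    simp only [eval, coe_add, eval_addBot hI v, eval_addBot hI w, coe_addBot]
    rw [add_add_add_comm, add_idem]
  | mul v w => Subtype.ext <| by
    simp only [eval, coe_mul, eval_addBot hI v, eval_addBot hI w, coe_addBot]
    exact hc.out.mul_add_bot (eval_le_of_forall_le hc.out.kstar_eq hI v)
      (eval_le_of_forall_le hc.out.kstar_eq hI w)
  | star w => Subtype.ext <| by
    simp only [eval, coe_kstar, eval_addBot hI w, coe_addBot]
    exact hc.out.kstar_add_bot (eval_le_of_forall_le hc.out.kstar_eq hI w)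

end KTerm

theorem zero_hyp_elimination {n : ℕ}
    (E : Set (KTerm n × KTerm n)) (r s t : KTerm n) :
    (∀ (K : Type u) [KleeneAlgebra K], ∀ I : Fin n → K,
      (∀ e ∈ E, (e.1).eval I = (e.2).eval I) → r.eval I = 0 → s.eval I = t.eval I) ↔
    (∀ (K : Type u) [KleeneAlgebra K], ∀ I : Fin n → K,
      (∀ e ∈ E, (e.1).eval I = (e.2).eval I) →
      (s.add ((univExp n).mul (r.mul (univExp n)))).eval I
        = (t.add ((univExp n).mul (r.mul (univExp n)))).eval I) := by
  constructor
  · intro h K _ I hE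
    set U := (univExp n).eval I
    set c := U * (r.eval I * U)
    have hbot : IsAbsorbingBot U c := .of_mul_mul (kstar_idem _) (r.eval_le_univExp I)
    have : Fact (IsAbsorbingBot U c) := ⟨hbot⟩
    have heval := KTerm.eval_addBot (c := c) (KTerm.le_eval_univExp I)
    have hr_le : r.eval I ≤ c := by
      simpa using mul_le_mul' hbot.one_le (mul_le_mul' le_rfl hbot.one_le)
    have hst := h (Set.Icc c U) (fun i => hbot.addBot (I i) (KTerm.le_eval_univExp I i))
      (fun e he => by simp only [heval, hE e he])
      (by rw [heval]; exact Subtype.ext hr_le.add_eq_right)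
    rw [heval, heval] at hst
    exact congrArg Subtype.val hst
  · intro h K _ I hE hr
    simpa [KTerm.eval, hr] using h K I hE
end
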